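/- arXiv:2001.08067 — 12 statements merged into one kernel-verified Lean document; each statement's English description precedes it below -/
import Mathlib

section
/- For every positive real number h, sqrt((2+2h)·(1/h² - 1/(h+2)²)·(1/h² - 1/(5h)²)·(1/h² - 1/(7h)²)) = (1/h + 1/(h+2))·(1/h + 1/(5h))·(1/h + 1/(7h)). -/
theorem stmt_3 (h : ℝ) (hh : 0 < h) :
    Real.sqrt ((2+2*h) * (1/h^2 - 1/((h+2))^2) * (1/h^2 - 1/(5*h)^2) * (1/h^2 - 1/(7*h)^2)) =
      (1/h + 1/((h+2))) * ((1/h + 1/(5*h))) * ((1/h + 1/(7*h))) := by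
  have h0 : h ≠ 0 := ne_of_gt hh
  have h2 : h + 2 ≠ 0 := by positivity
  have heq : (2+2*h) * (1/h^2 - 1/((h+2))^2) * (1/h^2 - 1/(5*h)^2) * (1/h^2 - 1/(7*h)^2)
      = ((1/h + 1/((h+2))) * ((1/h + 1/(5*h))) * ((1/h + 1/(7*h))))^2 := by
    field_simp
    ring
  rw [heq, Real.sqrt_sq (by positivity)]
end

section
/- For every positive real number h, sqrt((2+2h)·(1/h² - 1/(h+2)²)·(1/h² - 1/(4h)²)·(1/h² - 1/(11h)²)) = (1/h + 1/(h+2))·(1/h + 1/(4h))·(1/h + 1/(11h)). -/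
theorem stmt_4 (h : ℝ) (hh : 0 < h) :
    Real.sqrt ((2+2*h) * (1/h^2 - 1/((h+2))^2) * (1/h^2 - 1/(4*h)^2) * (1/h^2 - 1/(11*h)^2)) =
      (1/h + 1/((h+2))) * ((1/h + 1/(4*h))) * ((1/h + 1/(11*h))) := by
  have h2 : (0:ℝ) < h + 2 := by linarith
  rw [show (2+2*h) * (1/h^2 - 1/((h+2))^2) * (1/h^2 - 1/(4*h)^2) * (1/h^2 - 1/(11*h)^2)
      = ((1/h + 1/((h+2))) * ((1/h + 1/(4*h))) * ((1/h + 1/(11*h))))^2 by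
    field_simp
    ring]
  exact Real.sqrt_sq (by positivity)
end

section
/- For every positive real number h, sqrt((2+2h)·(1/h² - 1/(h+2)²)·(1/h² - 1/(11h/3)²)·(1/h² - 1/(15h)²)) = (1/h + 1/(h+2))·(1/h + 3/(11h))·(1/h + 1/(15h)). -/
theorem stmt_5 (h : ℝ) (hh : 0 < h) :
    Real.sqrt ((2+2*h) * (1/h^2 - 1/((h+2))^2) * (1/h^2 - 1/(11*h/3)^2) * (1/h^2 - 1/(15*h)^2)) =
      (1/h + 1/((h+2))) * ((1/h + 3/(11*h))) * ((1/h + 1/(15*h))) := by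
  have h2 : (0:ℝ) < h + 2 := by linarith
  have hB : (0:ℝ) ≤ (1/h + 1/((h+2))) * ((1/h + 3/(11*h))) * ((1/h + 1/(15*h))) := by
    positivity
  rw [show (2+2*h) * (1/h^2 - 1/((h+2))^2) * (1/h^2 - 1/(11*h/3)^2) * (1/h^2 - 1/(15*h)^2)
      = ((1/h + 1/((h+2))) * ((1/h + 3/(11*h))) * ((1/h + 1/(15*h))))^2 from by
    field_simp
    ring, Real.sqrt_sq hB]
end

section
/- For every positive real number h, sqrt((2+2h)·(1/h² - 1/(h+2)²)·(1/h² - 1/(17h/3)²)·(1/h² - 1/(6h)²)) = (1/h + 1/(h+2))·(1/h + 3/(17h))·(1/h + 1/(6h)). -/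
theorem stmt_6 (h : ℝ) (hh : 0 < h) :
    Real.sqrt ((2+2*h) * (1/h^2 - 1/((h+2))^2) * (1/h^2 - 1/(17*h/3)^2) * (1/h^2 - 1/(6*h)^2)) =
      (1/h + 1/((h+2))) * ((1/h + 3/(17*h))) * ((1/h + 1/(6*h))) := by
  have h2 : (0:ℝ) < h + 2 := by linarith
  have key : (2+2*h) * (1/h^2 - 1/((h+2))^2) * (1/h^2 - 1/(17*h/3)^2) * (1/h^2 - 1/(6*h)^2)
      = ((1/h + 1/((h+2))) * ((1/h + 3/(17*h))) * ((1/h + 1/(6*h))))^2 := by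
    field_simp
    ring
  rw [key, Real.sqrt_sq (by positivity)]
end

section
/- For every positive real number h, sqrt((2+2h)·(1/h² - 1/(h+2)²)·(1/h² - 1/(7h/2)²)·(1/h² - 1/(19h)²)) = (1/h + 1/(h+2))·(1/h + 2/(7h))·(1/h + 1/(19h)). -/
theorem stmt_7 (h : ℝ) (hh : 0 < h) :
    Real.sqrt ((2+2*h) * (1/h^2 - 1/((h+2))^2) * (1/h^2 - 1/(7*h/2)^2) * (1/h^2 - 1/(19*h)^2)) =
      (1/h + 1/((h+2))) * ((1/h + 2/(7*h))) * ((1/h + 1/(19*h))) := by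
  have hne : h ≠ 0 := hh.ne'
  have h2 : h + 2 ≠ 0 := by positivity
  rw [show (2+2*h) * (1/h^2 - 1/((h+2))^2) * (1/h^2 - 1/(7*h/2)^2) * (1/h^2 - 1/(19*h)^2)
      = ((1/h + 1/((h+2))) * ((1/h + 2/(7*h))) * ((1/h + 1/(19*h))))^2 by
    field_simp
    ring]
  exact Real.sqrt_sq (by positivity)
end

section
/- For every positive real number h, sqrt((2+2h)·(1/h² - 1/(h+2)²)·(1/h² - 1/(13h/3)²)·(1/h² - 1/(9h)²)) = (1/h + 1/(h+2))·(1/h + 3/(13h))·(1/h + 1/(9h)). -/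
theorem stmt_8 (h : ℝ) (hh : 0 < h) :
    Real.sqrt ((2+2*h) * (1/h^2 - 1/((h+2))^2) * (1/h^2 - 1/(13*h/3)^2) * (1/h^2 - 1/(9*h)^2)) =
      (1/h + 1/((h+2))) * ((1/h + 3/(13*h))) * ((1/h + 1/(9*h))) := by
  have hne : h ≠ 0 := hh.ne'
  have h2 : h + 2 ≠ 0 := by positivity
  have key : (2+2*h) * (1/h^2 - 1/((h+2))^2) * (1/h^2 - 1/(13*h/3)^2) * (1/h^2 - 1/(9*h)^2)
      = ((1/h + 1/((h+2))) * ((1/h + 3/(13*h))) * ((1/h + 1/(9*h))))^2 := by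
    field_simp
    ring
  rw [key, Real.sqrt_sq (by positivity)]
end

section
/- For every positive real number h, sqrt((3+2h)·(1/h² - 1/(h+3)²)·(1/h² - 1/(3h)²)·(1/h² - 1/(5h)²)) = (1/h + 1/(h+3))·(1/h + 1/(3h))·(1/h + 1/(5h)). -/
theorem stmt_9 (h : ℝ) (hh : 0 < h) :
    Real.sqrt ((3+2*h) * (1/h^2 - 1/((h+3))^2) * (1/h^2 - 1/(3*h)^2) * (1/h^2 - 1/(5*h)^2)) =
      (1/h + 1/((h+3))) * ((1/h + 1/(3*h))) * ((1/h + 1/(5*h))) := by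
  have h3 : (0:ℝ) < h + 3 := by linarith
  have harg : (3+2*h) * (1/h^2 - 1/((h+3))^2) * (1/h^2 - 1/(3*h)^2) * (1/h^2 - 1/(5*h)^2)
      = ((1/h + 1/((h+3))) * ((1/h + 1/(3*h))) * ((1/h + 1/(5*h))))^2 := by
    field_simp
    ring
  rw [harg, Real.sqrt_sq]
  positivity
end

section
/- For every positive real number h, sqrt((3+2h)·(1/h² - 1/(h+3)²)·(1/h² - 1/(7h/2)²)·(1/h² - 1/(4h)²)) = (1/h + 1/(h+3))·(1/h + 2/(7h))·(1/h + 1/(4h)). -/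
theorem stmt_10 (h : ℝ) (hh : 0 < h) :
    Real.sqrt ((3+2*h) * (1/h^2 - 1/((h+3))^2) * (1/h^2 - 1/(7*h/2)^2) * (1/h^2 - 1/(4*h)^2)) =
      (1/h + 1/((h+3))) * ((1/h + 2/(7*h))) * ((1/h + 1/(4*h))) := by
  have h3 : (0:ℝ) < h + 3 := by linarith
  have hR : 0 ≤ (1/h + 1/((h+3))) * ((1/h + 2/(7*h))) * ((1/h + 1/(4*h))) := by
    positivity
  have key : (3+2*h) * (1/h^2 - 1/((h+3))^2) * (1/h^2 - 1/(7*h/2)^2) * (1/h^2 - 1/(4*h)^2)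
      = ((1/h + 1/((h+3))) * ((1/h + 2/(7*h))) * ((1/h + 1/(4*h))))^2 := by
    field_simp
    ring
  rw [key, Real.sqrt_sq hR]
end

section
/- Let t, h, x, y, z be real numbers with t, h, x, y, z ≠ 0 and x, y, z ≠ ±h. If sqrt(t·(1/h² - 1/x²)·(1/h² - 1/y²)·(1/h² - 1/z²)) = (1/h + 1/x)·(1/h + 1/y)·(1/h + 1/z), then t·(z-h)/(z+h) = (x+h)(y+h)/((x-h)(y-h)). -/
/-! Writing `p = 1/h`, `q = 1/x`, `r = 1/y`, `s = 1/z`, each factor `p² - q²` of the radicand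
splits as `(p + q)(p - q)`. The right-hand side is nonzero, so squaring the equation and cancelling `(p + q)(p + r)(p + s)` once
gives `t (p - q)(p - r)(p - s) = (p + q)(p + r)(p + s)`; multiplying through by `(hx)(hy)(hz)` turns
this into `t (x - h)(y - h)(z - h) = (x + h)(y + h)(z + h)`, which is the claim after clearing
denominators. -/

theorem Real.sq_eq_of_sqrt_eq_of_ne_zero {a b : ℝ} (h : √a = b) (hb : b ≠ 0) : a = b ^ 2 := by
  have ha : 0 < a := Real.sqrt_ne_zero'.mp (h ▸ hb)
  rw [← h, Real.sq_sqrt ha.le]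

theorem mul_sub_mul_sub_mul_sub_eq_of_sqrt_eq {t p q r s : ℝ}
    (h : √(t * (p ^ 2 - q ^ 2) * (p ^ 2 - r ^ 2) * (p ^ 2 - s ^ 2)) = (p + q) * (p + r) * (p + s))
    (hne : (p + q) * (p + r) * (p + s) ≠ 0) :
    t * (p - q) * (p - r) * (p - s) = (p + q) * (p + r) * (p + s) := by
  have hsq := Real.sq_eq_of_sqrt_eq_of_ne_zero h hne
  apply mul_left_cancel₀ hne
  linear_combination hsq

theorem one_div_add_one_div_ne_zero {K : Type*} [Field K] {h x : K} (hh : h ≠ 0) (hx : x ≠ 0)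
    (hxh : x + h ≠ 0) : 1 / h + 1 / x ≠ 0 := by
  rw [one_div_add_one_div hh hx, add_comm]
  exact div_ne_zero hxh (mul_ne_zero hh hx)

theorem stmt_12_general (t h x y z : ℝ) (hh : h ≠ 0) (hx : x ≠ 0) (hy : y ≠ 0)
    (hz : z ≠ 0) (hx2 : x ≠ -h) (hy2 : y ≠ -h)
    (hz2 : z ≠ -h)
    (heq : Real.sqrt (t * (1/h^2 - 1/x^2) * (1/h^2 - 1/y^2) * (1/h^2 - 1/z^2)) =
      (1/h + 1/x) * (1/h + 1/y) * (1/h + 1/z)) :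
    t * (z - h) / (z + h) = (x + h) * (y + h) / ((x - h) * (y - h)) := by
  have hxp : x + h ≠ 0 := mt eq_neg_iff_add_eq_zero.mpr hx2
  have hyp : y + h ≠ 0 := mt eq_neg_iff_add_eq_zero.mpr hy2
  have hzp : z + h ≠ 0 := mt eq_neg_iff_add_eq_zero.mpr hz2
  have hne : (1/h + 1/x) * (1/h + 1/y) * (1/h + 1/z) ≠ 0 :=
    mul_ne_zero (mul_ne_zero (one_div_add_one_div_ne_zero hh hx hxp)
      (one_div_add_one_div_ne_zero hh hy hyp)) (one_div_add_one_div_ne_zero hh hz hzp)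
  have hrecip := mul_sub_mul_sub_mul_sub_eq_of_sqrt_eq (p := 1/h) (q := 1/x) (r := 1/y) (s := 1/z)
    (by simpa only [div_pow, one_pow] using heq) hne
  have key : t * (x - h) * (y - h) * (z - h) = (x + h) * (y + h) * (z + h) := by
    field_simp at hrecip
    linear_combination hrecip
  have hminus : t * (x - h) * (y - h) * (z - h) ≠ 0 := key ▸ mul_ne_zero (mul_ne_zero hxp hyp) hzp
  simp only [mul_ne_zero_iff] at hminus
  obtain ⟨⟨⟨-, hxm⟩, hym⟩, -⟩ := hminus
  rw [div_eq_div_iff hzp (mul_ne_zero hxm hym)]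
  linear_combination key

theorem stmt_12 (t h x y z : ℝ) (ht : t ≠ 0) (hh : h ≠ 0) (hx : x ≠ 0) (hy : y ≠ 0)
    (hz : z ≠ 0) (hx1 : x ≠ h) (hx2 : x ≠ -h) (hy1 : y ≠ h) (hy2 : y ≠ -h)
    (hz1 : z ≠ h) (hz2 : z ≠ -h)
    (heq : Real.sqrt (t * (1/h^2 - 1/x^2) * (1/h^2 - 1/y^2) * (1/h^2 - 1/z^2)) =
      (1/h + 1/x) * (1/h + 1/y) * (1/h + 1/z)) :
    t * (z - h) / (z + h) = (x + h) * (y + h) / ((x - h) * (y - h)) :=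
  stmt_12_general t h x y z hh hx hy hz hx2 hy2 hz2 heq
end

section
/- Let m, t, h, z be nonzero real numbers with z ≠ ±h. Define γ = m·t·(z-h) - m·(z+h) and β = h·m·t·(z-h) + h·m·(z+h) - h². Assume γ² - 4β ≥ 0, β ≠ 0, and (h² + h·γ + β)·β·(1/h + 1/z) > 0. Let x and y be the two roots of X² - γX + β = 0. Then x, y ≠ 0, x, y ≠ ±h, and sqrt(t·(1/h² - 1/x²)·(1/h² - 1/y²)·(1/h² - 1/z²)) = (1/h + 1/x)·(1/h + 1/y)·(1/h + 1/z). -/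
set_option maxHeartbeats 1000000


theorem stmt_13 (m t h z : ℝ) (hm : m ≠ 0) (ht : t ≠ 0) (hh : h ≠ 0) (hz : z ≠ 0)
    (hz1 : z ≠ h) (hz2 : z ≠ -h)
    (γ β : ℝ)
    (hγ : γ = m * t * (z - h) - m * (z + h))
    (hβ : β = h * m * t * (z - h) + h * m * (z + h) - h^2)
    (hdisc : γ^2 - 4 * β ≥ 0) (hβ0 : β ≠ 0)
    (hpos : (h^2 + h * γ + β) * β * (1/h + 1/z) > 0)
    (x y : ℝ) (hroot : ∀ X : ℝ, X^2 - γ * X + β = 0 ↔ X = x ∨ X = y) :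
    x ≠ 0 ∧ y ≠ 0 ∧ x ≠ h ∧ x ≠ -h ∧ y ≠ h ∧ y ≠ -h ∧
      Real.sqrt (t * (1/h^2 - 1/x^2) * (1/h^2 - 1/y^2) * (1/h^2 - 1/z^2)) =
        (1/h + 1/x) * (1/h + 1/y) * (1/h + 1/z) := by
  have hx : x^2 - γ * x + β = 0 := (hroot x).2 (Or.inl rfl)
  have hy : y^2 - γ * y + β = 0 := (hroot y).2 (Or.inr rfl)
  -- Vieta
  have hsum : x + y = γ := by
    have h1 : (γ - x)^2 - γ * (γ - x) + β = 0 := by nlinarith [hx]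
    rcases (hroot (γ - x)).1 h1 with h2 | h2
    · have h3 : (γ - y)^2 - γ * (γ - y) + β = 0 := by nlinarith [hy]
      rcases (hroot (γ - y)).1 h3 with h4 | h4
      · linarith
      · nlinarith [hx, hy]
    · linarith
  have hprod : x * y = β := by linear_combination x * hsum - hx
  have hzh : z + h ≠ 0 := fun h0 => hz2 (by linarith)
  have hzh' : z - h ≠ 0 := fun h0 => hz1 (by linarith)
  -- x, y ≠ 0
  have hx0 : x ≠ 0 := fun h0 => hβ0 (by rw [← hprod, h0]; ring)
  have hy0 : y ≠ 0 := fun h0 => hβ0 (by rw [← hprod, h0]; ring)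
  -- factor values
  have e1 : (x - h) * (y - h) = 2 * h * m * (z + h) := by
    have : x * y - h * (x + y) + h^2 = β - h * γ + h^2 := by rw [hprod, hsum]
    rw [hβ, hγ] at this; nlinarith [this]
  have e2 : (x + h) * (y + h) = 2 * h * m * t * (z - h) := by
    have : x * y + h * (x + y) + h^2 = β + h * γ + h^2 := by rw [hprod, hsum]
    rw [hβ, hγ] at this; nlinarith [this]
  have e1ne : (x - h) * (y - h) ≠ 0 := by
    rw [e1]
    exact mul_ne_zero (mul_ne_zero (mul_ne_zero two_ne_zero hh) hm) hzh
  have e2ne : (x + h) * (y + h) ≠ 0 := by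
    rw [e2]
    exact mul_ne_zero (mul_ne_zero (mul_ne_zero (mul_ne_zero two_ne_zero hh) hm) ht) hzh'
  have hxh : x ≠ h := fun h0 => e1ne (by rw [h0]; ring)
  have hyh : y ≠ h := fun h0 => e1ne (by rw [h0]; ring)
  have hxh' : x ≠ -h := fun h0 => e2ne (by rw [h0]; ring)
  have hyh' : y ≠ -h := fun h0 => e2ne (by rw [h0]; ring)
  refine ⟨hx0, hy0, hxh, hxh', hyh, hyh', ?_⟩
  -- key identity
  have hkey : t * ((x - h) * (y - h)) * (z - h) = (x + h) * (y + h) * (z + h) := by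
    rw [e1, e2]; ring
  -- positivity of RHS
  have hA : (1/h + 1/x) * (1/h + 1/y) * (1/h + 1/z) > 0 := by
    have hrw : (1/h + 1/x) * (1/h + 1/y) * (1/h + 1/z) =
        ((h^2 + h * γ + β) * β * (1/h + 1/z)) / (h^2 * β^2) := by
      rw [← hsum, ← hprod]
      field_simp
      ring
    rw [hrw]
    apply div_pos hpos
    positivity
  -- S = A^2
  have hS : t * (1/h^2 - 1/x^2) * (1/h^2 - 1/y^2) * (1/h^2 - 1/z^2) =
      ((1/h + 1/x) * (1/h + 1/y) * (1/h + 1/z))^2 := by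
    have hrw1 : t * (1/h^2 - 1/x^2) * (1/h^2 - 1/y^2) * (1/h^2 - 1/z^2) =
        (t * ((x - h) * (y - h)) * (z - h)) * ((x + h) * (y + h) * (z + h)) /
          (h^6 * x^2 * y^2 * z^2) := by
      field_simp
      ring
    have hrw2 : ((1/h + 1/x) * (1/h + 1/y) * (1/h + 1/z))^2 =
        ((x + h) * (y + h) * (z + h)) * ((x + h) * (y + h) * (z + h)) /
          (h^6 * x^2 * y^2 * z^2) := by
      field_simp
    rw [hrw1, hrw2, hkey]
  rw [hS, Real.sqrt_sq hA.le]
end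

section
/- Let t, h, x, y, z be real numbers, all nonzero, with x, y, z ≠ ±h, satisfying sqrt(t·(1/h² - 1/x²)·(1/h² - 1/y²)·(1/h² - 1/z²)) = (1/h + 1/x)·(1/h + 1/y)·(1/h + 1/z). Then there exists a nonzero real m such that, setting γ = m·t·(z-h) - m·(z+h) and β = h·m·t·(z-h) + h·m·(z+h) - h², we have x + y = γ, x·y = β, γ² - 4β ≥ 0, and (h² + h·γ + β)·β·(1/h + 1/z) > 0. -/
/-!
Since `1/h² - 1/a² = (1/h - 1/a)(1/h + 1/a)`, the radicand is `t · u · v` where `v` is the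
right-hand side and `u = ∏ (1/h - 1/a)`. The right-hand side is a square root and nonzero, hence
positive, and squaring gives `t · u = v`, i.e. `t (x-h)(y-h)(z-h) = (x+h)(y+h)(z+h)`. With
`m = (x-h)(y-h) / (2h(z+h))` this relation says exactly that `m t (z-h) = (x+h)(y+h)/(2h)` and
`m (z+h) = (x-h)(y-h)/(2h)`, from which `x + y` and `x y` are read off. The discriminant is
`(x-y)²`, and `(h² + h(x+y) + xy) · xy · (1/h + 1/z) = v · (hxy)² > 0`.
-/

lemma one_div_add_one_div_ne_zero_s14 {h a : ℝ} (hh : h ≠ 0) (ha : a ≠ 0) (hah : a ≠ -h) :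
    1 / h + 1 / a ≠ 0 := by
  rw [div_add_div _ _ hh ha]
  exact div_ne_zero (fun H => hah (by linarith)) (mul_ne_zero hh ha)

lemma pos_and_mul_eq_of_sqrt_mul_mul_eq {t u v : ℝ} (hv : v ≠ 0) (hsqrt : √(t * (u * v)) = v) :
    0 < v ∧ t * u = v := by
  have hv_pos : 0 < v := lt_of_le_of_ne (hsqrt ▸ Real.sqrt_nonneg _) hv.symm
  have hradicand : 0 ≤ t * (u * v) := (Real.sqrt_pos.mp (hsqrt.symm ▸ hv_pos)).le
  have hsq : t * (u * v) = v * v := by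
    rw [← Real.mul_self_sqrt hradicand, hsqrt]
  exact ⟨hv_pos, mul_right_cancel₀ hv (by linear_combination hsq)⟩

lemma mul_prod_sub_eq_prod_add {t h x y z : ℝ} (hh : h ≠ 0) (hx : x ≠ 0) (hy : y ≠ 0)
    (hz : z ≠ 0)
    (hrel : t * ((1/h - 1/x) * (1/h - 1/y) * (1/h - 1/z)) =
      (1/h + 1/x) * (1/h + 1/y) * (1/h + 1/z)) :
    t * ((x - h) * (y - h) * (z - h)) = (x + h) * (y + h) * (z + h) := by
  field_simp at hrel
  linear_combination hrel

lemma exists_add_eq_and_mul_eq {t h x y z : ℝ} (hh : h ≠ 0) (hx1 : x ≠ h) (hy1 : y ≠ h)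
    (hz2 : z ≠ -h) (hrel : t * ((x - h) * (y - h) * (z - h)) = (x + h) * (y + h) * (z + h)) :
    ∃ m : ℝ, m ≠ 0 ∧
      x + y = m * t * (z - h) - m * (z + h) ∧
      x * y = h * m * t * (z - h) + h * m * (z + h) - h^2 := by
  have hzp : z + h ≠ 0 := fun H => hz2 (by linarith)
  refine ⟨(x - h) * (y - h) / (2 * h * (z + h)), ?_, ?_, ?_⟩
  · exact div_ne_zero (mul_ne_zero (sub_ne_zero.mpr hx1) (sub_ne_zero.mpr hy1))
      (mul_ne_zero (mul_ne_zero two_ne_zero hh) hzp)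
  · field_simp
    linear_combination -hrel
  · field_simp
    linear_combination -hrel

lemma quadratic_mul_mul_one_div_add_eq {h x y z : ℝ} (hh : h ≠ 0) (hx : x ≠ 0) (hy : y ≠ 0) :
    (h^2 + h * (x + y) + x * y) * (x * y) * (1/h + 1/z) =
      (1/h + 1/x) * (1/h + 1/y) * (1/h + 1/z) * (h * x * y)^2 := by
  field_simp
  ring

theorem stmt_14_general (t h x y z : ℝ) (hh : h ≠ 0) (hx : x ≠ 0) (hy : y ≠ 0)
    (hz : z ≠ 0) (hx1 : x ≠ h) (hx2 : x ≠ -h) (hy1 : y ≠ h) (hy2 : y ≠ -h)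
    (hz2 : z ≠ -h)
    (heq : Real.sqrt (t * (1/h^2 - 1/x^2) * (1/h^2 - 1/y^2) * (1/h^2 - 1/z^2)) =
      (1/h + 1/x) * (1/h + 1/y) * (1/h + 1/z)) :
    ∃ m : ℝ, m ≠ 0 ∧
      x + y = m * t * (z - h) - m * (z + h) ∧
      x * y = h * m * t * (z - h) + h * m * (z + h) - h^2 ∧
      (m * t * (z - h) - m * (z + h))^2 -
        4 * (h * m * t * (z - h) + h * m * (z + h) - h^2) ≥ 0 ∧
      (h^2 + h * (m * t * (z - h) - m * (z + h)) +
          (h * m * t * (z - h) + h * m * (z + h) - h^2)) *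
        (h * m * t * (z - h) + h * m * (z + h) - h^2) * (1/h + 1/z) > 0 := by
  have hv : (1/h + 1/x) * (1/h + 1/y) * (1/h + 1/z) ≠ 0 :=
    mul_ne_zero (mul_ne_zero (one_div_add_one_div_ne_zero_s14 hh hx hx2)
      (one_div_add_one_div_ne_zero_s14 hh hy hy2)) (one_div_add_one_div_ne_zero_s14 hh hz hz2)
  have hsqrt : √(t * (((1/h - 1/x) * (1/h - 1/y) * (1/h - 1/z)) *
      ((1/h + 1/x) * (1/h + 1/y) * (1/h + 1/z)))) = (1/h + 1/x) * (1/h + 1/y) * (1/h + 1/z) := by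
    convert heq using 2
    ring
  obtain ⟨hv_pos, hrel⟩ := pos_and_mul_eq_of_sqrt_mul_mul_eq hv hsqrt
  obtain ⟨m, hm, hsum, hprod⟩ :=
    exists_add_eq_and_mul_eq hh hx1 hy1 hz2 (mul_prod_sub_eq_prod_add hh hx hy hz hrel)
  refine ⟨m, hm, hsum, hprod, ?_, ?_⟩
  · rw [← hsum, ← hprod]
    nlinarith [sq_nonneg (x - y)]
  · rw [← hsum, ← hprod, quadratic_mul_mul_one_div_add_eq hh hx hy]
    exact mul_pos hv_pos (by positivity)

theorem stmt_14 (t h x y z : ℝ) (ht : t ≠ 0) (hh : h ≠ 0) (hx : x ≠ 0) (hy : y ≠ 0)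
    (hz : z ≠ 0) (hx1 : x ≠ h) (hx2 : x ≠ -h) (hy1 : y ≠ h) (hy2 : y ≠ -h)
    (hz1 : z ≠ h) (hz2 : z ≠ -h)
    (heq : Real.sqrt (t * (1/h^2 - 1/x^2) * (1/h^2 - 1/y^2) * (1/h^2 - 1/z^2)) =
      (1/h + 1/x) * (1/h + 1/y) * (1/h + 1/z)) :
    ∃ m : ℝ, m ≠ 0 ∧
      x + y = m * t * (z - h) - m * (z + h) ∧
      x * y = h * m * t * (z - h) + h * m * (z + h) - h^2 ∧
      (m * t * (z - h) - m * (z + h))^2 -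
        4 * (h * m * t * (z - h) + h * m * (z + h) - h^2) ≥ 0 ∧
      (h^2 + h * (m * t * (z - h) - m * (z + h)) +
          (h * m * t * (z - h) + h * m * (z + h) - h^2)) *
        (h * m * t * (z - h) + h * m * (z + h) - h^2) * (1/h + 1/z) > 0 :=
  stmt_14_general t h x y z hh hx hy hz hx1 hx2 hy1 hy2 hz2 heq
end

section
/- For every integer t ≥ 3, there exist positive integers h, x, y, z with x, y, z ≠ h such that sqrt(t·(1/h² - 1/x²)·(1/h² - 1/y²)·(1/h² - 1/z²)) = (1/h + 1/x)·(1/h + 1/y)·(1/h + 1/z). -/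
lemma sqrt_key (t : ℝ) (h x y z : ℕ) (hh : 0 < h) (hx : 0 < x) (hy : 0 < y) (hz : 0 < z)
    (heq : t * (1/(h:ℝ)^2 - 1/(x:ℝ)^2) * (1/(h:ℝ)^2 - 1/(y:ℝ)^2) * (1/(h:ℝ)^2 - 1/(z:ℝ)^2)
      = ((1/(h:ℝ) + 1/(x:ℝ)) * (1/(h:ℝ) + 1/(y:ℝ)) * (1/(h:ℝ) + 1/(z:ℝ)))^2) :
    Real.sqrt (t * (1/(h:ℝ)^2 - 1/(x:ℝ)^2) * (1/(h:ℝ)^2 - 1/(y:ℝ)^2) *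
          (1/(h:ℝ)^2 - 1/(z:ℝ)^2)) =
        (1/(h:ℝ) + 1/(x:ℝ)) * (1/(h:ℝ) + 1/(y:ℝ)) * (1/(h:ℝ) + 1/(z:ℝ)) := by
  rw [heq, Real.sqrt_sq]
  have h1 : (0:ℝ) < h := by exact_mod_cast hh
  have h2 : (0:ℝ) < x := by exact_mod_cast hx
  have h3 : (0:ℝ) < y := by exact_mod_cast hy
  have h4 : (0:ℝ) < z := by exact_mod_cast hz
  positivity

theorem stmt_19 (t : ℤ) (ht : 3 ≤ t) :
    ∃ h x y z : ℕ, 0 < h ∧ 0 < x ∧ 0 < y ∧ 0 < z ∧ x ≠ h ∧ y ≠ h ∧ z ≠ h ∧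
      Real.sqrt ((t:ℝ) * (1/(h:ℝ)^2 - 1/(x:ℝ)^2) * (1/(h:ℝ)^2 - 1/(y:ℝ)^2) *
          (1/(h:ℝ)^2 - 1/(z:ℝ)^2)) =
        (1/(h:ℝ) + 1/(x:ℝ)) * (1/(h:ℝ) + 1/(y:ℝ)) * (1/(h:ℝ) + 1/(z:ℝ)) := by
  rcases eq_or_lt_of_le ht with h3 | h4
  · -- t = 3
    refine ⟨2, 5, 22, 58, by norm_num, by norm_num, by norm_num, by norm_num,
      by norm_num, by norm_num, by norm_num, ?_⟩
    apply sqrt_key _ _ _ _ _ (by norm_num) (by norm_num) (by norm_num) (by norm_num)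
    rw [← h3]
    push_cast
    norm_num
  · -- t ≥ 4
    rcases Int.even_or_odd t with ⟨m, hm⟩ | ⟨m, hm⟩
    · -- t = 2m, m ≥ 2; take k = m-1 ≥ 1, t = 2k+2
      have hm2 : 2 ≤ m := by omega
      obtain ⟨k, hk⟩ : ∃ k : ℕ, m = (k:ℤ) + 1 ∧ 1 ≤ k := by
        refine ⟨(m-1).toNat, by omega, by omega⟩
      obtain ⟨hk1, hk2⟩ := hk
      refine ⟨k, 5*k, 7*k, k+2, by omega, by omega, by omega, by omega,
        by omega, by omega, by omega, ?_⟩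
      apply sqrt_key _ _ _ _ _ (by omega) (by omega) (by omega) (by omega)
      have htR : (t:ℝ) = 2*(k:ℝ)+2 := by
        have : t = 2*(k:ℤ)+2 := by omega
        rw [this]; push_cast; ring
      have hkR : (0:ℝ) < k := by exact_mod_cast (by omega : 0 < k)
      rw [htR]
      push_cast
      have h5 : (5:ℝ)*k ≠ 0 := by positivity
      have h7 : (7:ℝ)*k ≠ 0 := by positivity
      have hk2R : (k:ℝ)+2 ≠ 0 := by positivity
      field_simp
      ring
    · -- t = 2m+1, m ≥ 2 (since t ≥ 5 odd); take k = m-1 ≥ 1, t = 2k+3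
      have hm2 : 2 ≤ m := by omega
      obtain ⟨k, hk1, hk2⟩ : ∃ k : ℕ, m = (k:ℤ) + 1 ∧ 1 ≤ k := by
        refine ⟨(m-1).toNat, by omega, by omega⟩
      refine ⟨k, 3*k, 5*k, k+3, by omega, by omega, by omega, by omega,
        by omega, by omega, by omega, ?_⟩
      apply sqrt_key _ _ _ _ _ (by omega) (by omega) (by omega) (by omega)
      have htR : (t:ℝ) = 2*(k:ℝ)+3 := by
        have : t = 2*(k:ℤ)+3 := by omega
        rw [this]; push_cast; ring
      have hkR : (0:ℝ) < k := by exact_mod_cast (by omega : 0 < k)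
      rw [htR]
      push_cast
      have h3' : (3:ℝ)*k ≠ 0 := by positivity
      have h5 : (5:ℝ)*k ≠ 0 := by positivity
      have hk3R : (k:ℝ)+3 ≠ 0 := by positivity
      field_simp
      ring
end
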